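/- arXiv:2011.05374 — 3 statements merged into one kernel-verified Lean document; each statement's English description precedes it below -/
import Mathlib

section
/- Let X be a CAT(0) cube complex and let z be a consistent choice of orientation for a subfamily ℋ of half-spaces that is closed under complementation and satisfies: H ∈ ℋ and H ⊆ H' with H' a half-space implies H' ∈ ℋ or the complement of H' misses a fixed nonempty set containing the basepoint q. Then the family of half-spaces consisting of {H ∈ ℋ : H belongs to z} together with {H ∉ ℋ : q ∈ H} is upward closed under inclusion. -/
/-- Half-spaces of the CAT(0) cube complex `X` are modeled as a
complement-closed family `𝒟` of subsets of the vertex set `V`.  Let `S` be a fixed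
nonempty set of vertices containing the basepoint `q`, and let
`ℋ = {H ∈ 𝒟 | both H and Hᶜ meet S}` (the half-spaces both of whose sides meet `S`).
Let `z ⊆ ℋ` be a consistent choice of orientation on `ℋ`: it contains exactly one
half-space of each complementary pair in `ℋ` and is upward closed within `ℋ`.
Then the family `{H ∈ ℋ | H ∈ z} ∪ {H ∈ 𝒟 | H ∉ ℋ and q ∈ H}` is upward closed under
inclusion (among half-spaces in `𝒟`). -/
theorem stmt6 {V : Type*} (𝒟 : Set (Set V))
    (hcompl : ∀ H ∈ 𝒟, Hᶜ ∈ 𝒟)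
    (S : Set V) (q : V) (hq : q ∈ S)
    (ℋ : Set (Set V))
    (hℋ : ℋ = {H | H ∈ 𝒟 ∧ (H ∩ S).Nonempty ∧ (Hᶜ ∩ S).Nonempty})
    (z : Set (Set V)) (hz : z ⊆ ℋ)
    (hchoice : ∀ H ∈ ℋ, (H ∈ z ∧ Hᶜ ∉ z) ∨ (H ∉ z ∧ Hᶜ ∈ z))
    (hup : ∀ H H' : Set V, H ∈ z → H' ∈ ℋ → H ⊆ H' → H' ∈ z) :
    ∀ H H' : Set V, H' ∈ 𝒟 → H ⊆ H' →
      H ∈ z ∪ {K | K ∈ 𝒟 ∧ K ∉ ℋ ∧ q ∈ K} →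
      H' ∈ z ∪ {K | K ∈ 𝒟 ∧ K ∉ ℋ ∧ q ∈ K} := by
  intro H H' hH'D hsub hH
  by_cases hH'ℋ : H' ∈ ℋ
  · left
    rcases hH with hHz | ⟨hHD, hHnℋ, hqH⟩
    · exact hup H H' hHz hH'ℋ hsub
    · -- H ∉ ℋ, q ∈ H, so Hᶜ ∩ S = ∅, i.e. S ⊆ H ⊆ H', contradicting H' ∈ ℋ
      exfalso
      have hHS : (H ∩ S).Nonempty := ⟨q, hqH, hq⟩
      have : (Hᶜ ∩ S).Nonempty → False := by
        intro h
        exact hHnℋ (hℋ ▸ ⟨hHD, hHS, h⟩)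
      have hSsub : S ⊆ H := by
        intro x hx
        by_contra hxH
        exact this ⟨x, hxH, hx⟩
      rw [hℋ] at hH'ℋ
      obtain ⟨_, _, y, hyc, hyS⟩ := hH'ℋ
      exact hyc (hsub (hSsub hyS))
  · right
    refine ⟨hH'D, hH'ℋ, ?_⟩
    rcases hH with hHz | ⟨_, _, hqH⟩
    · -- H ∈ z ⊆ ℋ, so H ∩ S nonempty, hence H' ∩ S nonempty; H' ∉ ℋ forces H'ᶜ ∩ S = ∅
      have hHℋ := hz hHz
      rw [hℋ] at hHℋ
      obtain ⟨_, ⟨x, hxH, hxS⟩, _⟩ := hHℋ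
      by_contra hqH'
      have : (H'ᶜ ∩ S).Nonempty → False := by
        intro h
        exact hH'ℋ (hℋ ▸ ⟨hH'D, ⟨x, hsub hxH, hxS⟩, h⟩)
      exact this ⟨q, hqH', hq⟩
    · exact hsub hqH
end

section
/- Two cubically convex subcomplexes of a CAT(0) cube complex that cross exactly the same set of hyperplanes, and both contain a common vertex, are equal. Consequently, two completions of the same cubical map f : (X,p) → (Y,q) coincide. -/
/-- Cubical convexity at the level of the 1-skeleton: a set of vertices containing every
combinatorial geodesic between any two of its vertices (in the full cube complex a convex
subcomplex moreover contains every cube whose 1-skeleton it contains, so it is determined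
by its vertex set). -/
def CubicallyConvex {V : Type*} (G : SimpleGraph V) (Z : Set V) : Prop :=
  ∀ ⦃v w : V⦄, v ∈ Z → w ∈ Z → ∀ p : G.Walk v w, p.length = G.dist v w →
    ∀ x ∈ p.support, x ∈ Z

/-- A subcomplex `Z` crosses the hyperplane of the half-space `H` if it contains an edge
dual to it. -/
def Crosses {V : Type*} (G : SimpleGraph V) (Z : Set V) (H : Set V) : Prop :=
  ∃ a b : V, a ∈ Z ∧ b ∈ Z ∧ G.Adj a b ∧ a ∈ H ∧ b ∉ H

/-- Along a walk from a vertex outside `H` to a vertex inside `H`, some edge crosses `H`. -/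
private lemma sign_change {V : Type*} {G : SimpleGraph V} (H : Set V) :
    ∀ {x y : V} (w : G.Walk x y), x ∉ H → y ∈ H →
      ∃ a b : V, a ∈ w.support ∧ b ∈ w.support ∧ G.Adj a b ∧ a ∈ H ∧ b ∉ H := by
  intro x y w
  induction w with
  | nil => exact fun hx hy => absurd hy hx
  | @cons x z y h q ih =>
    intro hx hy
    by_cases hz : z ∈ H
    · exact ⟨z, x, by simp [SimpleGraph.Walk.support_cons, q.start_mem_support],
        by simp [SimpleGraph.Walk.support_cons], h.symm, hz, hx⟩
    · obtain ⟨a, b, ha, hb, hab, haH, hbH⟩ := ih hz hy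
      exact ⟨a, b, by simp [SimpleGraph.Walk.support_cons, ha],
        by simp [SimpleGraph.Walk.support_cons, hb], hab, haH, hbH⟩

/-- If `v` lies in a convex set `Z` containing `p`, then every half-space separating `v`
from `p` is crossed by `Z`. -/
private lemma crosses_of_mem {V : Type*} {G : SimpleGraph V} (hconn : G.Connected)
    {Z : Set V} (hZ : CubicallyConvex G Z) {p v : V} (hp : p ∈ Z) (hv : v ∈ Z)
    {H : Set V} (hvH : v ∈ H) (hpH : p ∉ H) : Crosses G Z H := by
  obtain ⟨w, hw⟩ := hconn.exists_walk_length_eq_dist p v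
  obtain ⟨a, b, ha, hb, hab, haH, hbH⟩ := sign_change H w hpH hvH
  exact ⟨a, b, hZ hp hv w hw a ha, hZ hp hv w hw b hb, hab, haH, hbH⟩

/-- Conversely, if every half-space separating `v` from `p ∈ Z` is crossed by the convex
set `Z`, then `v ∈ Z`. -/
private lemma mem_of_crosses {V : Type*} {G : SimpleGraph V} (hconn : G.Connected)
    (ℋ : Set (Set V))
    (hcompl : ∀ H ∈ ℋ, Hᶜ ∈ ℋ)
    (hfin : ∀ u w : V, {H | H ∈ ℋ ∧ u ∈ H ∧ w ∉ H}.Finite)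
    (hdual : ∀ a b : V, G.Adj a b → ∃ H ∈ ℋ, a ∈ H ∧ b ∉ H ∧
        ∀ H' ∈ ℋ, ((a ∈ H' ∧ b ∉ H') ∨ (b ∈ H' ∧ a ∉ H')) → H' = H ∨ H' = Hᶜ)
    (hdist : ∀ a b : V, G.dist a b = {H | H ∈ ℋ ∧ a ∈ H ∧ b ∉ H}.ncard)
    {Z : Set V} (hZ : CubicallyConvex G Z) {p : V} (hp : p ∈ Z) :
    ∀ n (v : V), G.dist v p = n → (∀ H ∈ ℋ, v ∈ H → p ∉ H → Crosses G Z H) → v ∈ Z := by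
  intro n
  induction n using Nat.strong_induction_on with
  | _ n ih =>
    intro v hn hv
    rcases Nat.eq_zero_or_pos n with h0 | hpos
    · subst h0
      have : v = p := ((hconn v p).dist_eq_zero_iff).mp hn
      exact this ▸ hp
    · obtain ⟨w, hw⟩ := (hconn v p).exists_walk_length_eq_dist
      rw [hn] at hw
      cases w with
      | nil => simp at hw; omega
      | @cons _ u _ h q =>
        simp only [SimpleGraph.Walk.length_cons] at hw
        -- h : G.Adj v u, q : G.Walk u p, hw : q.length + 1 = n
        have hq1 : G.dist u p ≤ n - 1 := by
          have := SimpleGraph.dist_le q; omega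
        have hvu : G.dist v u ≤ 1 := by
          have := SimpleGraph.dist_le (SimpleGraph.Walk.cons h SimpleGraph.Walk.nil)
          simpa using this
        have htri : G.dist v p ≤ G.dist v u + G.dist u p := hconn.dist_triangle
        have hdu : G.dist u p = n - 1 := by omega
        obtain ⟨H₀, hH₀ℋ, hvH₀, huH₀, huniq⟩ := hdual v u h
        -- First show p ∉ H₀ by a counting argument.
        have hpH₀ : p ∉ H₀ := by
          by_contra hpH₀
          have hsub : {H | H ∈ ℋ ∧ v ∈ H ∧ p ∉ H} ⊂ {H | H ∈ ℋ ∧ u ∈ H ∧ p ∉ H} := by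
            constructor
            · rintro H' ⟨hℋ', hvH', hpH'⟩
              by_cases huH' : u ∈ H'
              · exact ⟨hℋ', huH', hpH'⟩
              · rcases huniq H' hℋ' (Or.inl ⟨hvH', huH'⟩) with rfl | rfl
                · exact absurd hpH₀ hpH'
                · exact absurd hvH₀ hvH'
            · intro hle
              have : H₀ᶜ ∈ {H | H ∈ ℋ ∧ v ∈ H ∧ p ∉ H} :=
                hle ⟨hcompl H₀ hH₀ℋ, huH₀, fun hc => hc hpH₀⟩
              exact this.2.1 hvH₀
          have hlt := Set.ncard_lt_ncard hsub (hfin u p)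
          rw [← hdist v p, ← hdist u p, hn, hdu] at hlt
          omega
        -- Every half-space separating u from p separates v from p, hence is crossed.
        have hu : u ∈ Z := by
          refine ih (n - 1) (by omega) u hdu ?_
          intro H' hℋ' huH' hpH'
          by_cases hvH' : v ∈ H'
          · exact hv H' hℋ' hvH' hpH'
          · rcases huniq H' hℋ' (Or.inr ⟨huH', hvH'⟩) with rfl | rfl
            · exact absurd huH' huH₀
            · exact absurd (by simpa using hpH') hpH₀
        -- H₀ separates v from p, hence Z crosses it.
        obtain ⟨a, b, haZ, hbZ, hab, haH, hbH⟩ := hv H₀ hH₀ℋ hvH₀ hpH₀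
        -- dist u a = dist v a + 1
        have hCeq : {H | H ∈ ℋ ∧ u ∈ H ∧ a ∉ H}
            = insert H₀ᶜ {H | H ∈ ℋ ∧ v ∈ H ∧ a ∉ H} := by
          ext H'
          constructor
          · rintro ⟨hℋ', huH', haH'⟩
            by_cases hvH' : v ∈ H'
            · exact Or.inr ⟨hℋ', hvH', haH'⟩
            · rcases huniq H' hℋ' (Or.inr ⟨huH', hvH'⟩) with rfl | rfl
              · exact absurd huH' huH₀
              · exact Or.inl rfl
          · rintro (rfl | ⟨hℋ', hvH', haH'⟩)
            · exact ⟨hcompl H₀ hH₀ℋ, huH₀, fun hc => hc haH⟩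
            · by_cases huH' : u ∈ H'
              · exact ⟨hℋ', huH', haH'⟩
              · rcases huniq H' hℋ' (Or.inl ⟨hvH', huH'⟩) with rfl | rfl
                · exact absurd haH haH'
                · exact absurd hvH₀ hvH'
        have hnot : H₀ᶜ ∉ {H | H ∈ ℋ ∧ v ∈ H ∧ a ∉ H} := fun hc => hc.2.1 hvH₀
        have hdua : G.dist u a = G.dist v a + 1 := by
          rw [hdist u a, hdist v a, hCeq, Set.ncard_insert_of_notMem hnot (hfin v a)]
        obtain ⟨q2, hq2⟩ := (hconn v a).exists_walk_length_eq_dist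
        have hlen : (SimpleGraph.Walk.cons h.symm q2).length = G.dist u a := by
          simp [SimpleGraph.Walk.length_cons, hq2, hdua]
        exact hZ hu haZ (SimpleGraph.Walk.cons h.symm q2) hlen v
          (by simp [SimpleGraph.Walk.support_cons, q2.start_mem_support])

/-- Two cubically convex subcomplexes of a CAT(0) cube complex that cross
exactly the same set of hyperplanes, and both contain a common vertex, are equal.
(Consequently, two completions of the same cubical map `f : (X,p) → (Y,q)` coincide,
their universal covers being convex hulls crossing the same hyperplanes.)
The CAT(0) cube complex is modeled by its connected 1-skeleton `G` on the vertex set `V`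
and its complement-closed half-space family `ℋ`, with finitely many half-spaces separating
any two vertices, each edge dual to a unique hyperplane, and combinatorial distance equal
to the number of separating hyperplanes. -/
theorem stmt10 {V : Type*} (G : SimpleGraph V) (hconn : G.Connected)
    (ℋ : Set (Set V))
    (hcompl : ∀ H ∈ ℋ, Hᶜ ∈ ℋ)
    (hfin : ∀ u w : V, {H | H ∈ ℋ ∧ u ∈ H ∧ w ∉ H}.Finite)
    (hdual : ∀ a b : V, G.Adj a b → ∃ H ∈ ℋ, a ∈ H ∧ b ∉ H ∧
        ∀ H' ∈ ℋ, ((a ∈ H' ∧ b ∉ H') ∨ (b ∈ H' ∧ a ∉ H')) → H' = H ∨ H' = Hᶜ)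
    (hdist : ∀ a b : V, G.dist a b = {H | H ∈ ℋ ∧ a ∈ H ∧ b ∉ H}.ncard)
    (Z Z' : Set V)
    (hZ : CubicallyConvex G Z) (hZ' : CubicallyConvex G Z')
    (hsame : ∀ H ∈ ℋ, Crosses G Z H ↔ Crosses G Z' H)
    (p : V) (hp : p ∈ Z) (hp' : p ∈ Z') :
    Z = Z' := by
  ext v
  constructor
  · intro hvZ
    refine mem_of_crosses hconn ℋ hcompl hfin hdual hdist hZ' hp' (G.dist v p) v rfl ?_
    intro H hH hvH hpH
    exact (hsame H hH).mp (crosses_of_mem hconn hZ hp hvZ hvH hpH)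
  · intro hvZ'
    refine mem_of_crosses hconn ℋ hcompl hfin hdual hdist hZ hp (G.dist v p) v rfl ?_
    intro H hH hvH hpH
    exact (hsame H hH).mpr (crosses_of_mem hconn hZ' hp' hvZ' hvH hpH)
end

section
/- Let g skewer a half-space H⁺ of a CAT(0) cube complex (g·H⁺ ⊊ H⁺), and let v be any vertex. Then there exists k ≥ 1 such that gᵏ·v ∈ H⁺ and g⁻ᵏ·v ∈ H⁻, where H⁻ is the complementary half-space. -/
/-!
The translates `gⁿ • H⁺` form a strictly decreasing chain of half-spaces. A vertex lying in
all of them would be separated from a vertex of `H⁺ \ g • H⁺` by infinitely many half-spaces,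
so eventually `v ∉ gⁿ • H⁺`, i.e. `g⁻ⁿ • v ∈ H⁻`. Since `g⁻¹` skewers `H⁻` in the same way,
eventually also `gⁿ • v ∈ H⁺`.
-/

open Filter
open scoped Pointwise

theorem Set.smul_set_ssubset_smul_set_iff {G V : Type*} [Group G] [MulAction G V] {a : G}
    {s t : Set V} : a • s ⊂ a • t ↔ s ⊂ t := by
  simp only [ssubset_iff_subset_not_subset, Set.smul_set_subset_smul_set_iff]

theorem eventually_not_mem_of_strictAnti {V : Type*} {ℋ : Set (Set V)} {s : ℕ → Set V}
    (hs : StrictAnti s) (hℋ : ∀ n, s n ∈ ℋ) {v w : V}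
    (hfin : {D | D ∈ ℋ ∧ v ∈ D ∧ w ∉ D}.Finite) {m : ℕ} (hw : w ∉ s m) :
    ∀ᶠ n in atTop, v ∉ s n := by
  refine eventually_atTop.2 ?_
  by_contra! hfreq
  have hv : ∀ n, v ∈ s n := fun n =>
    let ⟨k, hnk, hvk⟩ := hfreq n
    hs.antitone hnk hvk
  refine Set.infinite_of_injective_forall_mem (f := fun n => s (n + m))
    (hs.injective.comp (add_left_injective m)) (fun n => ?_) hfin
  exact ⟨hℋ _, hv _, fun hwn => hw (hs.antitone (Nat.le_add_left m n) hwn)⟩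

theorem eventually_not_mem_pow_smul_of_smul_ssubset {G V : Type*} [Group G] [MulAction G V]
    {ℋ : Set (Set V)} (hfin : ∀ u w : V, {D | D ∈ ℋ ∧ u ∈ D ∧ w ∉ D}.Finite) {g : G}
    {D : Set V} (hℋ : ∀ n : ℕ, g ^ n • D ∈ ℋ) (hskew : g • D ⊂ D) (v : V) :
    ∀ᶠ n : ℕ in atTop, v ∉ g ^ n • D := by
  obtain ⟨w, -, hw⟩ := Set.exists_of_ssubset hskew
  have hanti : StrictAnti fun n : ℕ => g ^ n • D := strictAnti_nat_of_succ_lt fun n => by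
    simpa only [pow_succ, mul_smul] using Set.smul_set_ssubset_smul_set_iff.2 hskew
  exact eventually_not_mem_of_strictAnti hanti hℋ (hfin v w) (m := 1) (by rwa [pow_one])

theorem inv_smul_compl_ssubset_compl {G V : Type*} [Group G] [MulAction G V] {g : G}
    {D : Set V} (hskew : g • D ⊂ D) : g⁻¹ • Dᶜ ⊂ Dᶜ := by
  rw [Set.smul_set_compl, compl_lt_compl_iff_lt]
  simpa only [inv_smul_smul] using (Set.smul_set_ssubset_smul_set_iff (a := g⁻¹)).2 hskew

theorem stmt13_general {V : Type*} {G : Type*} [Group G] [MulAction G V]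
    (ℋ : Set (Set V))
    (hcompl : ∀ D ∈ ℋ, Dᶜ ∈ ℋ)
    (hfin : ∀ u w : V, {D | D ∈ ℋ ∧ u ∈ D ∧ w ∉ D}.Finite)
    (hinv : ∀ (g : G), ∀ D ∈ ℋ, g • D ∈ ℋ)
    (Hplus : Set V) (hH : Hplus ∈ ℋ)
    (g : G) (hskew : g • Hplus ⊂ Hplus) (v : V) :
    ∃ k : ℕ, 1 ≤ k ∧ g ^ k • v ∈ Hplus ∧ (g ^ k)⁻¹ • v ∈ Hplusᶜ := by
  have hout := eventually_not_mem_pow_smul_of_smul_ssubset hfin (fun n => hinv _ _ hH) hskew v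
  have hin := eventually_not_mem_pow_smul_of_smul_ssubset hfin
    (fun n => hinv _ _ (hcompl _ hH)) (inv_smul_compl_ssubset_compl hskew) v
  obtain ⟨k, hk, hkin, hkout⟩ := ((eventually_ge_atTop 1).and (hin.and hout)).exists
  refine ⟨k, hk, ?_, fun hmem => hkout (Set.mem_smul_set_iff_inv_smul_mem.2 hmem)⟩
  simpa [Set.mem_smul_set_iff_inv_smul_mem, inv_pow] using hkin

/-- Let `g` skewer a half-space `H⁺` of a CAT(0) cube complex
(`g • H⁺ ⊊ H⁺`) and let `v` be any vertex.  The cube complex is modeled by its vertex set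
`V` with its complement-closed, `G`-invariant family `ℋ` of half-spaces, satisfying the
(local finiteness) property that only finitely many half-spaces separate any two vertices
(this encodes that combinatorial distance is finite and equals the number of separating
hyperplanes).  Then there exists `k ≥ 1` with `gᵏ • v ∈ H⁺` and `g⁻ᵏ • v ∈ H⁻ = (H⁺)ᶜ`. -/
theorem stmt13 {V : Type*} {G : Type*} [Group G] [MulAction G V]
    (ℋ : Set (Set V))
    (hcompl : ∀ D ∈ ℋ, Dᶜ ∈ ℋ)
    (hfin : ∀ u w : V, {D | D ∈ ℋ ∧ u ∈ D ∧ w ∉ D}.Finite)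
    (hinv : ∀ (g : G), ∀ D ∈ ℋ, g • D ∈ ℋ)
    (Hplus : Set V) (hH : Hplus ∈ ℋ)
    (hne : Hplus.Nonempty) (hne' : Hplusᶜ.Nonempty)
    (g : G) (hskew : g • Hplus ⊂ Hplus) (v : V) :
    ∃ k : ℕ, 1 ≤ k ∧ g ^ k • v ∈ Hplus ∧ (g ^ k)⁻¹ • v ∈ Hplusᶜ :=
  stmt13_general ℋ hcompl hfin hinv Hplus hH g hskew v
end
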